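/- arXiv:0803.3846 — 7 statements merged into one kernel-verified Lean document; each statement's English description precedes it below -/
import Mathlib

section
/- Let Q be a commutative monoid, k a field, and I a binomial ideal in k[Q], with congruence ~_I defined by u ~_I v iff t^u - λ t^v ∈ I for some λ ≠ 0. Then the quotient ring k[Q]/I, graded by the quotient monoid Q/~_I, has graded Hilbert function equal to 1 on every congruence class except the class {u ∈ Q : t^u ∈ I} of monomials lying in I, where it is 0. -/
/-- A binomial ideal in the monoid algebra `k[Q]`. -/
def IsBinomialIdeal {k Q : Type*} [Field k] [AddCommMonoid Q]
    (I : Ideal (AddMonoidAlgebra k Q)) : Prop :=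
  ∃ S : Set (AddMonoidAlgebra k Q), I = Ideal.span S ∧
    ∀ f ∈ S, ∃ (u v : Q) (lam : k),
      f = AddMonoidAlgebra.single u 1 - lam • AddMonoidAlgebra.single v 1

/-- The congruence `u ~_I v` iff `t^u - λ t^v ∈ I` for some nonzero `λ`. -/
def binomialRel {k Q : Type*} [Field k] [AddCommMonoid Q]
    (I : Ideal (AddMonoidAlgebra k Q)) (u v : Q) : Prop :=
  ∃ lam : k, lam ≠ 0 ∧
    AddMonoidAlgebra.single u 1 - lam • AddMonoidAlgebra.single v 1 ∈ I

/-- The graded piece of `k[Q]/I` in degree the congruence class of `u`: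
the span of the images of the monomials `t^v` with `v ~_I u`. -/
noncomputable def gradedPiece {k Q : Type*} [Field k] [AddCommMonoid Q]
    (I : Ideal (AddMonoidAlgebra k Q)) (u : Q) :
    Submodule k (AddMonoidAlgebra k Q ⧸ I) :=
  Submodule.span k
    ((Ideal.Quotient.mk I) ''
      {x | ∃ v : Q, binomialRel I u v ∧ x = AddMonoidAlgebra.single v 1})

/-- The `Q/~_I`-graded Hilbert function of `k[Q]/I` is `1` on every congruence
class, except the class of monomials lying in `I`, where it is `0`. -/
theorem hilbert_function_of_binomial_quotient {k Q : Type*} [Field k] [AddCommMonoid Q]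
    (I : Ideal (AddMonoidAlgebra k Q)) (hI : IsBinomialIdeal I) :
    ∀ u : Q,
      ((AddMonoidAlgebra.single u 1 : AddMonoidAlgebra k Q) ∈ I →
        Module.finrank k (gradedPiece I u) = 0) ∧
      ((AddMonoidAlgebra.single u 1 : AddMonoidAlgebra k Q) ∉ I →
        Module.finrank k (gradedPiece I u) = 1) := by
  intro u
  have mk_smul : ∀ (c : k) (f : AddMonoidAlgebra k Q),
      Ideal.Quotient.mk I (c • f) = c • Ideal.Quotient.mk I f := fun c f =>
    map_smul (Ideal.Quotient.mkₐ k I) c f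
  constructor
  · intro hu
    have hset : (Ideal.Quotient.mk I) ''
        {x | ∃ v : Q, binomialRel I u v ∧ x = AddMonoidAlgebra.single v 1} ⊆ {0} := by
      rintro _ ⟨x, ⟨v, ⟨lam, hlam, hmem⟩, rfl⟩, rfl⟩
      have h2 : lam • (AddMonoidAlgebra.single v 1 : AddMonoidAlgebra k Q) ∈ I := by
        have := I.sub_mem hu hmem
        simpa using this
      have h3 : (AddMonoidAlgebra.single v 1 : AddMonoidAlgebra k Q) ∈ I := by
        have h4 := I.smul_of_tower_mem lam⁻¹ h2
        rwa [smul_smul, inv_mul_cancel₀ hlam, one_smul] at h4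
      exact Set.mem_singleton_iff.mpr ((Ideal.Quotient.eq_zero_iff_mem).mpr h3)
    have hbot : gradedPiece I u = ⊥ := by
      rw [gradedPiece]
      refine eq_bot_iff.mpr ((Submodule.span_le).mpr ?_)
      intro x hx
      rw [SetLike.mem_coe, Submodule.mem_bot]
      exact hset hx
    rw [hbot]
    exact finrank_bot k _
  · intro hu
    have hx0 : Ideal.Quotient.mk I (AddMonoidAlgebra.single u 1) ≠ 0 :=
      fun h => hu ((Ideal.Quotient.eq_zero_iff_mem).mp h)
    have hspan : gradedPiece I u =
        Submodule.span k {Ideal.Quotient.mk I (AddMonoidAlgebra.single u 1)} := by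
      apply le_antisymm
      · rw [gradedPiece, Submodule.span_le]
        rintro _ ⟨x, ⟨v, ⟨lam, hlam, hmem⟩, rfl⟩, rfl⟩
        have heq : Ideal.Quotient.mk I (AddMonoidAlgebra.single u 1) =
            lam • Ideal.Quotient.mk I (AddMonoidAlgebra.single v 1) := by
          rw [← mk_smul, Ideal.Quotient.eq]
          exact hmem
        have : Ideal.Quotient.mk I (AddMonoidAlgebra.single v 1) =
            lam⁻¹ • Ideal.Quotient.mk I (AddMonoidAlgebra.single u 1) := by
          rw [heq, smul_smul, inv_mul_cancel₀ hlam, one_smul]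
        rw [SetLike.mem_coe, this]
        exact Submodule.smul_mem _ _ (Submodule.mem_span_singleton_self _)
      · rw [Submodule.span_le, Set.singleton_subset_iff]
        apply Submodule.subset_span
        exact ⟨AddMonoidAlgebra.single u 1, ⟨u, ⟨1, one_ne_zero, by simp⟩, rfl⟩, rfl⟩
    rw [hspan]
    exact finrank_span_singleton hx0
end

section
/- Let M be an integer matrix with q rows and let I(M) be the associated pure difference binomial ideal in k[x_1,...,x_q]. Two lattice points u, v ∈ ℕ^q satisfy x^u - x^v ∈ I(M) if and only if u and v lie in the same M-subgraph of ℕ^q, i.e., the congruence classes of the congruence determined by I(M) are exactly the connected components of the graph Γ(M). -/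
open MvPolynomial

/-- The positive part `w₊ ∈ ℕ^q` of an integer vector `w`. -/
noncomputable def posPart {q : ℕ} (w : Fin q → ℤ) : Fin q →₀ ℕ :=
  Finsupp.equivFunOnFinite.symm fun i => (w i).toNat

/-- The pure difference binomial ideal `I(M)` of an integer matrix `M`. -/
noncomputable def latticeBasisIdeal (k : Type*) [Field k] {q m : ℕ}
    (M : Matrix (Fin q) (Fin m) ℤ) : Ideal (MvPolynomial (Fin q) k) :=
  Ideal.span {f | ∃ j : Fin m,
    f = monomial (posPart fun i => M i j) 1 - monomial (posPart fun i => -(M i j)) 1}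

/-- `u` and `v` are adjacent in the graph `Γ(M)` if `u - v` or `v - u` is a
column of `M`. -/
def Medge {q m : ℕ} (M : Matrix (Fin q) (Fin m) ℤ) (u v : Fin q →₀ ℕ) : Prop :=
  ∃ j : Fin m, (∀ i, (u i : ℤ) - (v i : ℤ) = M i j) ∨ (∀ i, (v i : ℤ) - (u i : ℤ) = M i j)

/-!
Connectedness in `Γ(M)` is a congruence `∼` on the monoid `ℕ^q`, because translating a path by a
fixed vector gives a path. The map `k[ℕ^q] → k[ℕ^q/∼]` kills every generator `x^{w₊} - x^{w₋}`
of `I(M)`, and it sends `x^u - x^v` to the difference of the basis elements indexed by the classes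
of `u` and `v`, which vanishes only when the classes agree. Conversely, an edge with `u - v = w`
gives `x^u - x^v = x^{u - w₊} (x^{w₊} - x^{w₋}) ∈ I(M)`, and a path is a telescoping sum of edges.
-/

@[simp] lemma posPart_apply {q : ℕ} (w : Fin q → ℤ) (i : Fin q) :
    _root_.posPart w i = (w i).toNat := rfl

namespace Medge

variable {q m : ℕ} {M : Matrix (Fin q) (Fin m) ℤ}

lemma symm {u v : Fin q →₀ ℕ} (h : Medge M u v) : Medge M v u := by
  obtain ⟨j, h | h⟩ := h
  exacts [⟨j, Or.inr h⟩, ⟨j, Or.inl h⟩]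

instance : Std.Symm (Medge M) := ⟨fun _ _ => symm⟩

lemma add_right {u v : Fin q →₀ ℕ} (h : Medge M u v) (c : Fin q →₀ ℕ) :
    Medge M (u + c) (v + c) := by
  obtain ⟨j, h | h⟩ := h
  · exact ⟨j, Or.inl fun i => by simp only [Finsupp.add_apply, Nat.cast_add]; linarith [h i]⟩
  · exact ⟨j, Or.inr fun i => by simp only [Finsupp.add_apply, Nat.cast_add]; linarith [h i]⟩

lemma reflTransGen_add_right {u v : Fin q →₀ ℕ} (h : Relation.ReflTransGen (Medge M) u v)
    (c : Fin q →₀ ℕ) : Relation.ReflTransGen (Medge M) (u + c) (v + c) :=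
  Relation.ReflTransGen.lift (· + c) (fun _ _ hab => hab.add_right c) _ _ h

end Medge

def componentCon {q m : ℕ} (M : Matrix (Fin q) (Fin m) ℤ) : AddCon (Fin q →₀ ℕ) where
  r := Relation.ReflTransGen (Medge M)
  iseqv := ⟨fun _ => .refl, fun h => Std.Symm.symm _ _ h, .trans⟩
  add' {w x y z} h₁ h₂ := by
    have h₂' := Medge.reflTransGen_add_right h₂ x
    rw [add_comm y, add_comm z] at h₂'
    exact (Medge.reflTransGen_add_right h₁ y).trans h₂'

lemma AddMonoidAlgebra.mapDomainRingHom_single_one_eq_iff {R G H : Type*} [Semiring R]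
    [Nontrivial R] [AddMonoid G] [AddMonoid H] (f : G →+ H) (a b : G) :
    mapDomainRingHom R f (single a 1) = mapDomainRingHom R f (single b 1) ↔ f a = f b := by
  simp only [mapDomainRingHom_apply, mapDomain_single]
  exact single_left_inj one_ne_zero

section

variable {k : Type*} [Field k] {q m : ℕ} {M : Matrix (Fin q) (Fin m) ℤ}

lemma monomial_sub_monomial_mem_latticeBasisIdeal_of_column {u v : Fin q →₀ ℕ} (j : Fin m)
    (h : ∀ i, (u i : ℤ) - (v i : ℤ) = M i j) :
    monomial u (1 : k) - monomial v 1 ∈ latticeBasisIdeal k M := by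
  set c : Fin q →₀ ℕ := u - _root_.posPart fun i => M i j
  have hu : c + _root_.posPart (fun i => M i j) = u := by
    ext i; have := h i; simp only [c, Finsupp.add_apply, Finsupp.tsub_apply, posPart_apply]; omega
  have hv : c + _root_.posPart (fun i => -M i j) = v := by
    ext i; have := h i; simp only [c, Finsupp.add_apply, Finsupp.tsub_apply, posPart_apply]; omega
  have hgen : monomial (_root_.posPart fun i => M i j) (1 : k) -
      monomial (_root_.posPart fun i => -M i j) 1 ∈ latticeBasisIdeal k M :=
    Ideal.subset_span ⟨j, rfl⟩
  have hmul := Ideal.mul_mem_left _ (monomial c 1) hgen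
  rwa [mul_sub, monomial_mul, monomial_mul, one_mul, hu, hv] at hmul

lemma monomial_sub_monomial_mem_latticeBasisIdeal_of_medge {u v : Fin q →₀ ℕ}
    (h : Medge M u v) : monomial u (1 : k) - monomial v 1 ∈ latticeBasisIdeal k M := by
  obtain ⟨j, h | h⟩ := h
  · exact monomial_sub_monomial_mem_latticeBasisIdeal_of_column j h
  · rw [← neg_sub]
    exact neg_mem (monomial_sub_monomial_mem_latticeBasisIdeal_of_column j h)

lemma monomial_sub_monomial_mem_latticeBasisIdeal_of_reflTransGen {u v : Fin q →₀ ℕ}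
    (h : Relation.ReflTransGen (Medge M) u v) :
    monomial u (1 : k) - monomial v 1 ∈ latticeBasisIdeal k M := by
  induction h with
  | refl => simp
  | @tail w x _ hwx ih =>
    rw [← sub_add_sub_cancel _ (monomial w 1)]
    exact add_mem ih (monomial_sub_monomial_mem_latticeBasisIdeal_of_medge hwx)

lemma monomial_sub_monomial_mem_ker_componentCon_iff {u v : Fin q →₀ ℕ} :
    monomial u (1 : k) - monomial v 1 ∈
        RingHom.ker (AddMonoidAlgebra.mapDomainRingHom k (componentCon M).mk') ↔
      Relation.ReflTransGen (Medge M) u v := by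
  rw [RingHom.mem_ker, map_sub, sub_eq_zero, ← single_eq_monomial, ← single_eq_monomial,
    AddMonoidAlgebra.mapDomainRingHom_single_one_eq_iff, AddCon.coe_mk', AddCon.eq]
  rfl

lemma latticeBasisIdeal_le_ker_componentCon :
    latticeBasisIdeal k M ≤
      RingHom.ker (AddMonoidAlgebra.mapDomainRingHom k (componentCon M).mk') := by
  refine Ideal.span_le.mpr ?_
  rintro _ ⟨j, rfl⟩
  exact monomial_sub_monomial_mem_ker_componentCon_iff.mpr <| .single ⟨j, Or.inl fun i => by simp only [posPart_apply]; omega⟩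

end

/-- `x^u - x^v ∈ I(M)` iff `u` and `v` lie in the same `M`-subgraph of `ℕ^q`,
i.e. the same connected component of `Γ(M)`. -/
theorem mem_latticeBasisIdeal_iff_M_path {k : Type*} [Field k] {q m : ℕ}
    (M : Matrix (Fin q) (Fin m) ℤ) (u v : Fin q →₀ ℕ) :
    (monomial u (1 : k) - monomial v 1 ∈ latticeBasisIdeal k M) ↔
      Relation.ReflTransGen (Medge M) u v := by
  refine ⟨fun h => ?_, monomial_sub_monomial_mem_latticeBasisIdeal_of_reflTransGen⟩
  exact monomial_sub_monomial_mem_ker_componentCon_iff.mp (latticeBasisIdeal_le_ker_componentCon h)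
end

section
/- Let Q ⊆ ℤ^ℓ be an affine semigroup, Φ a face of Q, and let Γ be a congruence class in the localized semigroup Q + ℤΦ under a congruence of the form ~_{I[ℤΦ]} induced by a binomial ideal. Then Γ is infinite if and only if Γ contains two distinct elements v ≠ w with w - v ∈ Q + ℤΦ. -/
/-!
Because `Φ ≤ Q`, the localization `Q + ℤΦ` equals `Q` plus the subgroup generated by `Φ`; subgroups
of `ℤ^ℓ` are finitely generated, hence so is `Q + ℤΦ`. Writing its elements as `ℕ`-combinations of
finitely many generators, Dickson's lemma makes `v ≼ w :↔ w - v ∈ Q + ℤΦ` a well-quasi-order, so an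
infinite class contains two distinct comparable elements. Conversely, if `v ~ v + d` with `d ≠ 0`,
translating by multiples of `d` gives `v ~ v + n • d` for all `n`, and these are pairwise distinct
because `ℤ^ℓ` is torsion-free.
-/

theorem AddSubgroup.fg_toAddSubmonoid_of_isNoetherian {G : Type*} [AddCommGroup G]
    [IsNoetherian ℤ G] (H : AddSubgroup G) : H.toAddSubmonoid.FG := by
  rw [← AddSubgroup.fg_iff_addSubmonoid_fg, ← H.toIntSubmodule_toAddSubgroup,
    ← Submodule.fg_iff_addSubgroup_fg]
  exact IsNoetherian.noetherian _

theorem AddSubmonoid.sup_closure_neg_eq_sup_addSubgroupClosure {G : Type*} [AddCommGroup G]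
    {Q Φ : AddSubmonoid G} (hΦQ : Φ ≤ Q) :
    Q ⊔ closure (Neg.neg '' (Φ : Set G)) = Q ⊔ (AddSubgroup.closure (Φ : Set G)).toAddSubmonoid := by
  rw [AddSubgroup.closure_toAddSubmonoid, closure_union, closure_eq, Set.image_neg_eq_neg,
    ← sup_assoc, sup_eq_left.mpr hΦQ]

theorem AddSubmonoid.FG.sup_closure_neg {G : Type*} [AddCommGroup G] [IsNoetherian ℤ G]
    {Q Φ : AddSubmonoid G} (hQ : Q.FG) (hΦQ : Φ ≤ Q) :
    (Q ⊔ closure (Neg.neg '' (Φ : Set G))).FG := by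
  rw [sup_closure_neg_eq_sup_addSubgroupClosure hΦQ]
  exact hQ.sup (AddSubgroup.fg_toAddSubmonoid_of_isNoetherian _)

theorem AddSubmonoid.FG.partiallyWellOrderedOn_sub_mem {G : Type*} [AddCommGroup G]
    {M : AddSubmonoid G} (hM : M.FG) :
    (M : Set G).PartiallyWellOrderedOn (fun v w => w - v ∈ M) := by
  obtain ⟨T, rfl⟩ := hM
  set φ : (T → ℕ) →+ G :=
    { toFun := fun a => ∑ i, a i • (i : G)
      map_zero' := by simp
      map_add' := fun a b => by simp only [Pi.add_apply, add_nsmul, Finset.sum_add_distrib] }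
  have hrange : (closure (T : Set G) : Set G) = φ '' Set.univ := by
    ext x
    simp [mem_closure_iff_of_fintype, eq_comm, φ]
  have hpwo : (Set.univ : Set (T → ℕ)).IsPWO := Set.isPWO_univ_iff.mpr inferInstance
  rw [hrange]
  refine hpwo.image_of_monotone_on fun a _ b _ hab => ?_
  obtain ⟨c, rfl⟩ := exists_add_of_le hab
  rw [map_add, add_sub_cancel_left, ← SetLike.mem_coe, hrange]
  exact Set.mem_image_of_mem φ (Set.mem_univ c)

theorem Set.Infinite.exists_ne_of_partiallyWellOrderedOn {α : Type*} {s : Set α}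
    {r : α → α → Prop} (hs : s.Infinite) (hr : s.PartiallyWellOrderedOn r) :
    ∃ v ∈ s, ∃ w ∈ s, v ≠ w ∧ r v w := by
  by_contra! h
  exact hs (IsAntichain.finite_of_partiallyWellOrderedOn (fun v hv w hw hvw => h v hv w hw hvw) hr)

section binomialRel

open AddMonoidAlgebra

variable {k M : Type*} [Field k] [AddCommMonoid M] (I : Ideal (AddMonoidAlgebra k M))

theorem binomialRel_symm {a b : M} (h : binomialRel I a b) : binomialRel I b a := by
  obtain ⟨lam, hlam, h⟩ := h
  refine ⟨lam⁻¹, inv_ne_zero hlam, ?_⟩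
  have key : single b (1 : k) - lam⁻¹ • single a 1 = (-lam⁻¹) • (single a 1 - lam • single b 1) := by
    rw [smul_sub, smul_smul, neg_mul, inv_mul_cancel₀ hlam, neg_smul, neg_smul, one_smul]
    abel
  rw [key]
  exact I.smul_of_tower_mem _ h

theorem binomialRel_trans {a b c : M} (h₁ : binomialRel I a b) (h₂ : binomialRel I b c) :
    binomialRel I a c := by
  obtain ⟨lam, hlam, h₁⟩ := h₁
  obtain ⟨mu, hmu, h₂⟩ := h₂
  refine ⟨lam * mu, mul_ne_zero hlam hmu, ?_⟩
  have key : single a (1 : k) - (lam * mu) • single c 1 =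
      (single a 1 - lam • single b 1) + lam • (single b 1 - mu • single c 1) := by
    rw [smul_sub, smul_smul]
    abel
  rw [key]
  exact I.add_mem h₁ (I.smul_of_tower_mem _ h₂)

theorem binomialRel_add_left {a b : M} (d : M) (h : binomialRel I a b) :
    binomialRel I (d + a) (d + b) := by
  obtain ⟨lam, hlam, h⟩ := h
  refine ⟨lam, hlam, ?_⟩
  have key : single (d + a) (1 : k) - lam • single (d + b) 1 =
      single d 1 * (single a 1 - lam • single b 1) := by
    rw [mul_sub, mul_smul_comm, single_mul_single, single_mul_single, one_mul]
  rw [key]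
  exact I.mul_mem_left _ h

def binomialCon : AddCon M where
  r := binomialRel I
  iseqv :=
    { refl := fun a => ⟨1, one_ne_zero, by simp⟩
      symm := binomialRel_symm I
      trans := binomialRel_trans I }
  add' {a b c d} h₁ h₂ := by
    have h₁' := binomialRel_add_left I c h₁
    have h₂' := binomialRel_add_left I b h₂
    rw [add_comm c a, add_comm c b] at h₁'
    exact binomialRel_trans I h₁' h₂'

end binomialRel

theorem AddCon.rel_add_nsmul {M : Type*} [AddCommMonoid M] (c : AddCon M) {v d : M}
    (h : c v (v + d)) (n : ℕ) : c v (v + n • d) := by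
  induction n with
  | zero => simpa using c.refl v
  | succ n ih =>
    have step : c (v + n • d) (v + (n + 1) • d) := by
      simpa [succ_nsmul, add_assoc, add_comm, add_left_comm] using c.add (c.refl (n • d)) h
    exact c.trans ih step

theorem AddCon.infinite_setOf_rel_of_sub_mem {G : Type*} [AddCommGroup G] [IsAddTorsionFree G]
    {M : AddSubmonoid G} (c : AddCon M) {u v w : M} (hv : c u v) (hw : c u w) (hvw : v ≠ w)
    (hd : (w : G) - v ∈ M) : {x | c u x}.Infinite := by
  set d : M := ⟨(w : G) - v, hd⟩
  have hvd : c v (v + d) := by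
    convert c.trans (c.symm hv) hw
    ext
    simp [d]
  have hd0 : (d : G) ≠ 0 := sub_ne_zero.mpr fun h => hvw (Subtype.ext h).symm
  have hinj : Function.Injective fun n : ℕ => v + n • d := by
    refine Function.Injective.of_comp (f := ((↑) : M → G)) ?_
    have := (add_right_injective (v : G)).comp
      (injective_nsmul_iff_not_isOfFinAddOrder.mpr (not_isOfFinAddOrder_of_isAddTorsionFree hd0))
    simpa [Function.comp_def] using this
  exact Set.infinite_of_injective_forall_mem hinj fun n => c.trans hv (c.rel_add_nsmul hvd n)

theorem class_infinite_iff_general {ℓ : ℕ} {k : Type*} [Field k]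
    (Q Φ : AddSubmonoid (Fin ℓ → ℤ)) (hQfg : Q.FG) (hΦQ : Φ ≤ Q)
    (QΦ : AddSubmonoid (Fin ℓ → ℤ))
    (hQΦ : QΦ = Q ⊔ AddSubmonoid.closure (Neg.neg '' (Φ : Set (Fin ℓ → ℤ))))
    (I : Ideal (AddMonoidAlgebra k QΦ))
    (Γ : Set QΦ) (u₀ : QΦ) (hΓ : Γ = {v | binomialRel I u₀ v}) :
    Γ.Infinite ↔ ∃ v ∈ Γ, ∃ w ∈ Γ, v ≠ w ∧ ((w : Fin ℓ → ℤ) - (v : Fin ℓ → ℤ)) ∈ QΦ := by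
  constructor
  · intro hinf
    have hfg : QΦ.FG := hQΦ ▸ hQfg.sup_closure_neg hΦQ
    obtain ⟨_, ⟨v, hv, rfl⟩, _, ⟨w, hw, rfl⟩, hvw, hwv⟩ :=
      (hinf.image Subtype.val_injective.injOn).exists_ne_of_partiallyWellOrderedOn
        (hfg.partiallyWellOrderedOn_sub_mem.mono (Set.image_subset_iff.mpr fun x _ => x.2))
    exact ⟨v, hv, w, hw, fun h => hvw (congrArg _ h), hwv⟩
  · rintro ⟨v, hv, w, hw, hvw, hd⟩
    subst hΓ
    exact (binomialCon I).infinite_setOf_rel_of_sub_mem hv hw hvw hd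

/-- Let `Q ⊆ ℤ^ℓ` be an affine semigroup (a finitely generated submonoid),
`Φ` a face of `Q`, and `QΦ = Q + ℤΦ` the localization of `Q` along `Φ`.  A
congruence class `Γ` in `QΦ` under the congruence induced by a binomial ideal
of `k[QΦ]` is infinite iff it contains two distinct elements whose difference
lies in `QΦ`. -/
theorem class_infinite_iff {ℓ : ℕ} {k : Type*} [Field k]
    (Q Φ : AddSubmonoid (Fin ℓ → ℤ)) (hQfg : Q.FG) (hΦQ : Φ ≤ Q)
    (hface : ∀ a ∈ Q, ∀ b ∈ Q, a + b ∈ Φ → a ∈ Φ ∧ b ∈ Φ)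
    (QΦ : AddSubmonoid (Fin ℓ → ℤ))
    (hQΦ : QΦ = Q ⊔ AddSubmonoid.closure (Neg.neg '' (Φ : Set (Fin ℓ → ℤ))))
    (I : Ideal (AddMonoidAlgebra k QΦ)) (hI : IsBinomialIdeal I)
    (Γ : Set QΦ) (u₀ : QΦ) (hΓ : Γ = {v | binomialRel I u₀ v}) :
    Γ.Infinite ↔ ∃ v ∈ Γ, ∃ w ∈ Γ, v ≠ w ∧ ((w : Fin ℓ → ℤ) - (v : Fin ℓ → ℤ)) ∈ QΦ :=
  class_infinite_iff_general Q Φ hQfg hΦQ QΦ hQΦ I Γ u₀ hΓ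
end

section
/- Let Q be an affine semigroup with face Φ, k a field, I a binomial ideal in k[Q], and Γ a congruence class in Q + ℤΦ under the congruence induced by the localized ideal I[ℤΦ]. If Γ contains two distinct elements v ≠ w with w - v ∈ Q + ℤΦ, then for every u ∈ Γ the monomial t^u maps to 0 in the localization (k[Q]/I)_{p_Φ} of k[Q]/I at the prime ideal p_Φ of the face Φ. -/
/-!
Write `w - v = q - φ` with `q ∈ Q`, `φ ∈ Φ`, and put `c = w - v`. If
`t^{u₀} ≡ a t^u ≡ b t^v ≡ d t^w = d t^c t^v` modulo `I[ℤΦ]`, then `ab t^u ≡ b t^{u₀} ≡ ad t^c t^u`,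
and multiplying by `t^φ` shows that `s = ab t^φ - ad t^q` kills `t^u`. As `q ≠ φ`, the coefficient
of `s` at `φ ∈ Φ` is `ab ≠ 0`, whereas every element of `p_Φ` vanishes on `Φ` because `Φ` is a face.
-/

open AddMonoidAlgebra

theorem AddSubmonoid.exists_sub_of_mem_sup_closure_neg {G : Type*} [AddCommGroup G]
    {Q Φ : AddSubmonoid G} {c : G} (hc : c ∈ Q ⊔ closure (Neg.neg '' (Φ : Set G))) :
    ∃ q ∈ Q, ∃ φ ∈ Φ, c = q - φ := by
  obtain ⟨q, hq, z, hz, rfl⟩ := mem_sup.mp hc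
  rw [Set.image_neg_eq_neg, mem_closure_neg, closure_eq] at hz
  exact ⟨q, hq, -z, hz, by rw [sub_neg_eq_add]⟩

theorem Ideal.smul_sub_smul_mul_mem_of_sub_smul_mem {k R : Type*} [CommSemiring k] [CommRing R]
    [Algebra k R] {J : Ideal R} {x y z t : R} {a b d : k} (hy : x - a • y ∈ J)
    (hz : x - b • z ∈ J) (htz : x - d • (t * z) ∈ J) :
    (b * a) • y - (d * a) • (t * y) ∈ J := by
  convert J.sub_mem (J.sub_mem (J.smul_of_tower_mem b htz) (J.smul_of_tower_mem b hy))
    (J.sub_mem (J.mul_mem_left t (J.smul_of_tower_mem d hz))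
      (J.mul_mem_left t (J.smul_of_tower_mem d hy))) using 1
  simp only [Algebra.smul_def, map_mul]
  ring

theorem AddMonoidAlgebra.notMem_span_single_of_coeff_ne_zero {k M : Type*} [Semiring k]
    [AddCommMonoid M] {F : Set M} (hF : ∀ x y, x + y ∈ F → y ∈ F) {f : AddMonoidAlgebra k M}
    {x : M} (hx : x ∈ F) (hfx : f.coeff x ≠ 0) :
    f ∉ Ideal.span {g | ∃ m, m ∉ F ∧ g = single m 1} := by
  have hspan : {g | ∃ m, m ∉ F ∧ g = single m (1 : k)} = of' k M '' Fᶜ := by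
    ext g; simp [of'_apply, eq_comm]
  rw [hspan, mem_ideal_span_of'_image]
  intro h
  obtain ⟨m, hm, d, rfl⟩ := h x (Finsupp.mem_support_iff.mpr hfx)
  exact hm (hF d m hx)

theorem monomial_zero_in_localization_general {ℓ : ℕ} {k : Type*} [Field k]
    (Q Φ : AddSubmonoid (Fin ℓ → ℤ)) (hΦQ : Φ ≤ Q)
    (hface : ∀ a ∈ Q, ∀ b ∈ Q, a + b ∈ Φ → a ∈ Φ ∧ b ∈ Φ)
    (QΦ : AddSubmonoid (Fin ℓ → ℤ))
    (hQΦ : QΦ = Q ⊔ AddSubmonoid.closure (Neg.neg '' (Φ : Set (Fin ℓ → ℤ))))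
    (hle : Q ≤ QΦ)
    -- the prime ideal `p_Φ` of the face `Φ`
    (pΦ : Ideal (AddMonoidAlgebra k Q))
    (hpΦ : pΦ = Ideal.span {f | ∃ u : Q, (u : Fin ℓ → ℤ) ∉ Φ ∧
      f = AddMonoidAlgebra.single u 1})
    -- the extension `I[ℤΦ]` of `I` to `k[Q + ℤΦ]`
    (Iext : Ideal (AddMonoidAlgebra k QΦ))
    (Γ : Set QΦ) (u₀ : QΦ) (hΓ : Γ = {v | binomialRel Iext u₀ v})
    (hvw : ∃ v ∈ Γ, ∃ w ∈ Γ, v ≠ w ∧ ((w : Fin ℓ → ℤ) - (v : Fin ℓ → ℤ)) ∈ QΦ) :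
    ∀ u ∈ Γ, ∃ s : AddMonoidAlgebra k Q, s ∉ pΦ ∧
      (AddMonoidAlgebra.mapDomainRingHom k (AddSubmonoid.inclusion hle)) s *
        AddMonoidAlgebra.single u 1 ∈ Iext := by
  subst hΓ
  rintro u ⟨a, ha, hu⟩
  obtain ⟨v, ⟨b, hb, hv⟩, w, ⟨d, hd, hw⟩, hvw, hc⟩ := hvw
  obtain ⟨q, hq, φ, hφ, hqφ⟩ :=
    AddSubmonoid.exists_sub_of_mem_sup_closure_neg (by rwa [← hQΦ])
  have hne : (⟨q, hq⟩ : Q) ≠ ⟨φ, hΦQ hφ⟩ := by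
    rintro ⟨⟩
    rw [sub_self, sub_eq_zero] at hqφ
    exact hvw (Subtype.ext hqφ.symm)
  refine ⟨single ⟨φ, hΦQ hφ⟩ (b * a) - single ⟨q, hq⟩ (d * a), ?_, ?_⟩
  · rw [hpΦ]
    refine notMem_span_single_of_coeff_ne_zero (F := {x : Q | (x : Fin ℓ → ℤ) ∈ Φ})
      (fun x y h ↦ (hface x x.2 y y.2 h).2) (x := ⟨φ, hΦQ hφ⟩) hφ ?_
    simp [coeff_single, hne, ha, hb]
  · set c : QΦ := ⟨_, hc⟩
    have hcv : single w (1 : k) = single c 1 * single v 1 := by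
      rw [single_mul_single, one_mul]
      exact congrArg (single · 1) (Subtype.ext (sub_add_cancel _ _).symm)
    rw [hcv] at hw
    convert Iext.mul_mem_left (single ⟨φ, hle (hΦQ hφ)⟩ 1)
      (Ideal.smul_sub_smul_mul_mem_of_sub_smul_mem hu hv hw) using 1
    simp only [map_sub, mapDomainRingHom_apply, mapDomain_single, mul_sub, sub_mul, smul_single,
      single_mul_single, one_mul, mul_one, smul_eq_mul]
    congr 2
    refine Subtype.ext ?_
    change q + (u : Fin ℓ → ℤ) = φ + ((w - v) + u)
    rw [hqφ]
    abel

/-- If a congruence class `Γ ⊆ Q + ℤΦ` for the congruence induced by the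
localized ideal `I[ℤΦ]` contains two distinct elements whose difference lies
in `Q + ℤΦ`, then for every `u ∈ Γ` the monomial `t^u` maps to `0` in the
localization `(k[Q]/I)_{p_Φ}`: some `s ∉ p_Φ` kills `t^u` modulo `I[ℤΦ]`. -/
theorem monomial_zero_in_localization {ℓ : ℕ} {k : Type*} [Field k]
    (Q Φ : AddSubmonoid (Fin ℓ → ℤ)) (hQfg : Q.FG) (hΦQ : Φ ≤ Q)
    (hface : ∀ a ∈ Q, ∀ b ∈ Q, a + b ∈ Φ → a ∈ Φ ∧ b ∈ Φ)
    (QΦ : AddSubmonoid (Fin ℓ → ℤ))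
    (hQΦ : QΦ = Q ⊔ AddSubmonoid.closure (Neg.neg '' (Φ : Set (Fin ℓ → ℤ))))
    (hle : Q ≤ QΦ)
    (I : Ideal (AddMonoidAlgebra k Q)) (hI : IsBinomialIdeal I)
    -- the prime ideal `p_Φ` of the face `Φ`
    (pΦ : Ideal (AddMonoidAlgebra k Q))
    (hpΦ : pΦ = Ideal.span {f | ∃ u : Q, (u : Fin ℓ → ℤ) ∉ Φ ∧
      f = AddMonoidAlgebra.single u 1})
    -- the extension `I[ℤΦ]` of `I` to `k[Q + ℤΦ]`
    (Iext : Ideal (AddMonoidAlgebra k QΦ))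
    (hIext : Iext = Ideal.map
      (AddMonoidAlgebra.mapDomainRingHom k (AddSubmonoid.inclusion hle)) I)
    (Γ : Set QΦ) (u₀ : QΦ) (hΓ : Γ = {v | binomialRel Iext u₀ v})
    (hvw : ∃ v ∈ Γ, ∃ w ∈ Γ, v ≠ w ∧ ((w : Fin ℓ → ℤ) - (v : Fin ℓ → ℤ)) ∈ QΦ) :
    ∀ u ∈ Γ, ∃ s : AddMonoidAlgebra k Q, s ∉ pΦ ∧
      (AddMonoidAlgebra.mapDomainRingHom k (AddSubmonoid.inclusion hle)) s *
        AddMonoidAlgebra.single u 1 ∈ Iext :=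
  monomial_zero_in_localization_general Q Φ hΦQ hface QΦ hQΦ hle pΦ hpΦ Iext Γ u₀ hΓ hvw
end

section
/- Let Q be an affine semigroup, Φ a face of Q, and ~ a congruence on Q + ℤΦ induced by a binomial ideal. Then the group ℤΦ acts freely on the set B of finite (bounded) congruence classes of Q + ℤΦ: for φ ∈ ℤΦ and a bounded class Γ, the translate φ + Γ is again a bounded class, and φ + Γ = Γ implies φ = 0. -/
/-!
Since `ℤΦ ⊆ Q + ℤΦ` is a group, translation by `φ ∈ ℤΦ` is invertible and, multiplying binomials
by the monomial `t^φ`, maps the class of `u` onto the class of `φ + u`. If `φ + Γ = Γ` for a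
finite class `Γ ∋ u`, then all `n • φ + u` lie in `Γ`, so `φ` has finite order in the torsion-free
group `ℤ^ℓ`, i.e. `φ = 0`.
-/

section binomialRel

variable {k Q : Type*} [Field k] [AddCommMonoid Q] (I : Ideal (AddMonoidAlgebra k Q))

lemma binomialRel_refl (u : Q) : binomialRel I u u :=
  ⟨1, one_ne_zero, by simp⟩

lemma binomialRel.add_left {u v : Q} (h : binomialRel I u v) (w : Q) :
    binomialRel I (w + u) (w + v) := by
  obtain ⟨lam, hlam, hmem⟩ := h
  refine ⟨lam, hlam, ?_⟩
  convert I.mul_mem_left (AddMonoidAlgebra.single w 1) hmem using 1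
  rw [mul_sub, mul_smul_comm, AddMonoidAlgebra.single_mul_single,
    AddMonoidAlgebra.single_mul_single, one_mul]

lemma image_add_left_setOf_binomialRel {φ : Q} (hφ : IsAddUnit φ) (u : Q) :
    (φ + ·) '' {v | binomialRel I u v} = {v | binomialRel I (φ + u) v} := by
  obtain ⟨ψ, hψφ⟩ := isAddUnit_iff_exists_neg'.1 hφ
  have hcancel : ∀ w, ψ + (φ + w) = w := fun w => by rw [← add_assoc, hψφ, zero_add]
  ext v
  constructor
  · rintro ⟨w, hw, rfl⟩
    exact hw.add_left I φ
  · intro hv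
    refine ⟨ψ + v, ?_, ?_⟩
    · show binomialRel I u (ψ + v)
      simpa only [hcancel] using hv.add_left I ψ
    · show φ + (ψ + v) = v
      rw [add_left_comm, hcancel]

end binomialRel

lemma isOfFinAddOrder_of_image_add_left_eq {M : Type*} [AddMonoid M] [IsCancelAdd M] {S : Set M}
    (hS : S.Finite) {u : M} (hu : u ∈ S) {φ : M} (hφS : (φ + ·) '' S = S) :
    IsOfFinAddOrder φ := by
  -- submonoids of groups carry only the `IsCancelAdd` mixin, not an `AddCancelMonoid` instance
  let _ : AddCancelMonoid M := { ‹AddMonoid M›, ‹IsCancelAdd M› with }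
  have horbit : ∀ n : ℕ, n • φ + u ∈ S := by
    intro n
    induction n with
    | zero => simpa using hu
    | succ n ih =>
      rw [succ_nsmul', add_assoc, ← hφS]
      exact ⟨_, ih, rfl⟩
  by_contra hφ
  have hinj : Function.Injective (fun n : ℕ => n • φ + u) :=
    (add_left_injective u).comp (injective_nsmul_iff_not_isOfFinAddOrder.2 hφ)
  exact Set.infinite_of_injective_forall_mem hinj horbit hS

lemma AddSubgroup.closure_toAddSubmonoid_le {G : Type*} [AddGroup G] {s : Set G}
    {M : AddSubmonoid G} (hs : s ⊆ M) (hneg : -s ⊆ M) :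
    (AddSubgroup.closure s).toAddSubmonoid ≤ M := by
  rw [AddSubgroup.closure_toAddSubmonoid, AddSubmonoid.closure_le]
  exact Set.union_subset hs hneg

theorem ZPhi_acts_freely_on_bounded_classes_general {ℓ : ℕ} {k : Type*} [Field k]
    (Q Φ : AddSubmonoid (Fin ℓ → ℤ)) (hΦQ : Φ ≤ Q)
    (QΦ : AddSubmonoid (Fin ℓ → ℤ))
    (hQΦ : QΦ = Q ⊔ AddSubmonoid.closure (Neg.neg '' (Φ : Set (Fin ℓ → ℤ))))
    (I : Ideal (AddMonoidAlgebra k QΦ))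
    (φ : QΦ) (hφ : (φ : Fin ℓ → ℤ) ∈ AddSubgroup.closure (Φ : Set (Fin ℓ → ℤ)))
    (Γ : Set QΦ) (u₀ : QΦ) (hΓ : Γ = {v | binomialRel I u₀ v})
    (hbdd : Γ.Finite) :
    ((∃ u₁ : QΦ, (fun v => φ + v) '' Γ = {v | binomialRel I u₁ v}) ∧
      ((fun v => φ + v) '' Γ).Finite) ∧
    ((fun v => φ + v) '' Γ = Γ → φ = 0) := by
  have hZΦ : (AddSubgroup.closure (Φ : Set (Fin ℓ → ℤ))).toAddSubmonoid ≤ QΦ := by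
    subst hQΦ
    refine AddSubgroup.closure_toAddSubmonoid_le (fun x hx => (le_sup_left : Q ≤ _) (hΦQ hx)) ?_
    rw [← Set.image_neg_eq_neg]
    exact AddSubmonoid.subset_closure.trans (SetLike.coe_subset_coe.2 le_sup_right)
  have hunit : IsAddUnit φ :=
    isAddUnit_iff_exists_neg.2 ⟨⟨_, hZΦ (AddSubgroup.neg_mem _ hφ)⟩, Subtype.ext (add_neg_cancel _)⟩
  subst hΓ
  refine ⟨⟨⟨φ + u₀, image_add_left_setOf_binomialRel I hunit u₀⟩, hbdd.image _⟩, fun hfix => ?_⟩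
  have hfin := isOfFinAddOrder_of_image_add_left_eq hbdd (binomialRel_refl I u₀) hfix
  exact Subtype.ext (AddSubmonoid.isOfFinAddOrder_coe.2 hfin).eq_zero'

/-- The group `ℤΦ` acts freely on the set of bounded (finite) congruence
classes of `Q + ℤΦ` under the congruence induced by a binomial ideal: the
translate of a bounded class by `φ ∈ ℤΦ` is again a bounded class, and if the
translate equals the class itself then `φ = 0`. -/
theorem ZPhi_acts_freely_on_bounded_classes {ℓ : ℕ} {k : Type*} [Field k]
    (Q Φ : AddSubmonoid (Fin ℓ → ℤ)) (hQfg : Q.FG) (hΦQ : Φ ≤ Q)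
    (hface : ∀ a ∈ Q, ∀ b ∈ Q, a + b ∈ Φ → a ∈ Φ ∧ b ∈ Φ)
    (QΦ : AddSubmonoid (Fin ℓ → ℤ))
    (hQΦ : QΦ = Q ⊔ AddSubmonoid.closure (Neg.neg '' (Φ : Set (Fin ℓ → ℤ))))
    (I : Ideal (AddMonoidAlgebra k QΦ)) (hI : IsBinomialIdeal I)
    (φ : QΦ) (hφ : (φ : Fin ℓ → ℤ) ∈ AddSubgroup.closure (Φ : Set (Fin ℓ → ℤ)))
    (Γ : Set QΦ) (u₀ : QΦ) (hΓ : Γ = {v | binomialRel I u₀ v})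
    (hbdd : Γ.Finite) :
    ((∃ u₁ : QΦ, (fun v => φ + v) '' Γ = {v | binomialRel I u₁ v}) ∧
      ((fun v => φ + v) '' Γ).Finite) ∧
    ((fun v => φ + v) '' Γ = Γ → φ = 0) :=
  ZPhi_acts_freely_on_bounded_classes_general Q Φ hΦQ QΦ hQΦ I φ hφ Γ u₀ hΓ hbdd
end

section
/- Let ℂ[x_1,...,x_n] be graded by a pointed d × n integer matrix A of rank d with ℤA = ℤ^d, and let p be an A-graded prime ideal such that ℂ[x]/p is toral (has bounded Hilbert function). Then p is a binomial ideal. -/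
open MvPolynomial

/-- The `A`-degree of a monomial exponent `u ∈ ℕ^n`, namely `Au ∈ ℤ^d`. -/
def Adeg {d n : ℕ} (A : Matrix (Fin d) (Fin n) ℤ) (u : Fin n →₀ ℕ) : Fin d → ℤ :=
  A.mulVec fun i => (u i : ℤ)

/-- An ideal is `A`-graded if it contains each `A`-homogeneous component of
each of its elements. -/
def AGraded {d n : ℕ} (A : Matrix (Fin d) (Fin n) ℤ)
    (I : Ideal (MvPolynomial (Fin n) ℂ)) : Prop :=
  ∀ f ∈ I, ∀ α : Fin d → ℤ,
    ((f.support.filter fun u => Adeg A u = α).sum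
      fun u => monomial u (f.coeff u)) ∈ I

/-- The degree-`α` graded piece of `ℂ[x]/I` for the `A`-grading. -/
noncomputable def AgradedPiece {d n : ℕ} (A : Matrix (Fin d) (Fin n) ℤ)
    (I : Ideal (MvPolynomial (Fin n) ℂ)) (α : Fin d → ℤ) :
    Submodule ℂ (MvPolynomial (Fin n) ℂ ⧸ I) :=
  Submodule.span ℂ
    ((Ideal.Quotient.mk I) '' {x | ∃ u : Fin n →₀ ℕ, Adeg A u = α ∧ x = monomial u 1})

/-- A graded ideal `I` is toral if the `A`-graded Hilbert function of
`ℂ[x]/I` is bounded above. -/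
def Toral {d n : ℕ} (A : Matrix (Fin d) (Fin n) ℤ)
    (I : Ideal (MvPolynomial (Fin n) ℂ)) : Prop :=
  ∃ C : ℕ, ∀ α : Fin d → ℤ, Module.finrank ℂ (AgradedPiece A I α) ≤ C

/-!
If `x^v ∉ p` and `x^u` has the same `A`-degree, then `x^u ≡ c • x^v (mod p)` for some `c : ℂ`:
otherwise `x^u / x^v` lies outside `ℂ` in the fraction field of the domain `ℂ[x]/p`, so it is
transcendental over the algebraically closed field `ℂ`, and the classes of `x^(iu + (C - i)v)`,
`i ≤ C`, are `C + 1` linearly independent elements of a single graded piece, against the bound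
`C` on the Hilbert function. Hence a homogeneous `g ∈ p` either has all its monomials in `p`
(each `x^w = x^w - 0 • x^w` is a binomial) or, modulo the binomials lying in `p`, is congruent to
`s • x^v` for one of its monomials `x^v ∉ p`, which forces `s = 0`. Finally `p` is graded, so
each of its elements is the sum of homogeneous components lying in `p`.
-/

theorem Transcendental.linearIndependent_pow {R A : Type*} [CommRing R] [CommRing A]
    [Algebra R A] {t : A} (ht : Transcendental R t) : LinearIndependent R fun n : ℕ => t ^ n := by
  simpa [Function.comp_def] using (Polynomial.basisMonomials R).linearIndependent.map'
    (Polynomial.aeval t).toLinearMap (LinearMap.ker_eq_bot.mpr (transcendental_iff_injective.mp ht))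

theorem transcendental_of_notMem_range {k K : Type*} [Field k] [IsAlgClosed k] [CommRing K]
    [IsDomain K] [Algebra k K] {t : K} (ht : t ∉ (algebraMap k K).range) : Transcendental k t :=
  fun halg => ht <| minpoly.degree_eq_one_iff.mp <|
    IsAlgClosed.degree_eq_one_of_irreducible k (minpoly.irreducible halg.isIntegral)

theorem linearIndependent_pow_mul_pow {k T : Type*} [Field k] [IsAlgClosed k] [CommRing T]
    [IsDomain T] [Algebra k T] {a b : T} (hb : b ≠ 0) (hab : ∀ c : k, a ≠ c • b) (m : ℕ) :
    LinearIndependent k fun i : Fin (m + 1) => a ^ (i : ℕ) * b ^ (m - i) := by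
  let φ := IsScalarTower.toAlgHom k T (FractionRing T)
  have hφ : Function.Injective φ := IsFractionRing.injective T (FractionRing T)
  have hb' : φ b ≠ 0 := (map_ne_zero_iff φ hφ).mpr hb
  have ht : φ a / φ b ∉ (algebraMap k (FractionRing T)).range := by
    rintro ⟨c, hc⟩
    refine hab c (hφ ?_)
    rw [map_smul, Algebra.smul_def, hc, div_mul_cancel₀ _ hb']
  have hpow := ((transcendental_of_notMem_range ht).linearIndependent_pow.comp
    Fin.val (Fin.val_injective (n := m + 1))).map' (LinearMap.mulLeft k (φ b ^ m))
    (LinearMap.ker_eq_bot.mpr (mul_right_injective₀ (pow_ne_zero m hb')))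
  have hfam : (φ.toLinearMap ∘ fun i : Fin (m + 1) => a ^ (i : ℕ) * b ^ (m - i)) =
      LinearMap.mulLeft k (φ b ^ m) ∘ (fun n => (φ a / φ b) ^ n) ∘ Fin.val := by
    funext i
    obtain ⟨j, hj⟩ := Nat.exists_eq_add_of_le (Nat.lt_succ_iff.mp i.isLt)
    simp [hj, pow_add, div_pow]
    field_simp
  exact .of_comp φ.toLinearMap (hfam ▸ hpow)

section Binomials

variable {σ k : Type*} [Field k]

def binomialsIn (I : Ideal (MvPolynomial σ k)) : Set (MvPolynomial σ k) :=
  {f | f ∈ I ∧ ∃ (u v : σ →₀ ℕ) (c : k), f = monomial u 1 - c • monomial v 1}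

theorem mem_span_binomialsIn_of_forall_monomial_mem {I : Ideal (MvPolynomial σ k)}
    {g : MvPolynomial σ k} (hg : ∀ w ∈ g.support, monomial w 1 ∈ I) :
    g ∈ Ideal.span (binomialsIn I) := by
  rw [g.as_sum]
  refine Ideal.sum_mem _ fun w hw => ?_
  rw [← mul_one (coeff w g), ← smul_eq_mul, ← smul_monomial]
  exact Submodule.smul_of_tower_mem _ _ (Ideal.subset_span ⟨hg w hw, w, w, 0, by simp⟩)

theorem mem_span_binomialsIn_of_forall_sub_smul_mem {I : Ideal (MvPolynomial σ k)}
    {g : MvPolynomial σ k} (hg : g ∈ I) {u : σ →₀ ℕ} (hu : monomial u 1 ∉ I)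
    (hc : ∀ w ∈ g.support, ∃ c : k, monomial w 1 - c • monomial u 1 ∈ I) :
    g ∈ Ideal.span (binomialsIn I) := by
  choose! c hc using hc
  set s := ∑ w ∈ g.support, coeff w g * c w
  have hsum : ∑ w ∈ g.support, coeff w g • (monomial w 1 - c w • monomial u 1) =
      g - s • monomial u 1 := by
    simp only [smul_sub, Finset.sum_sub_distrib, smul_monomial, smul_eq_mul, mul_one, s, map_sum]
    rw [← g.as_sum]
  have hs : s = 0 := by
    by_contra hs
    refine hu ?_
    have : s • monomial u 1 ∈ I := by
      rw [← sub_sub_cancel g (s • monomial u 1), ← hsum]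
      exact I.sub_mem hg (I.sum_mem fun w hw => Submodule.smul_of_tower_mem _ _ (hc w hw))
    simpa [smul_smul, inv_mul_cancel₀ hs] using Submodule.smul_of_tower_mem _ s⁻¹ this
  rw [← sub_zero g, ← zero_smul k (monomial u 1 : MvPolynomial σ k), ← hs, ← hsum]
  exact Ideal.sum_mem _ fun w hw =>
    Submodule.smul_of_tower_mem _ _ (Ideal.subset_span ⟨hc w hw, w, u, c w, rfl⟩)

end Binomials

section Grading

variable {d n : ℕ} (A : Matrix (Fin d) (Fin n) ℤ)

theorem Adeg_add (u v : Fin n →₀ ℕ) : Adeg A (u + v) = Adeg A u + Adeg A v := by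
  simp only [Adeg, ← Matrix.mulVec_add]
  rfl

theorem Adeg_nsmul (m : ℕ) (u : Fin n →₀ ℕ) : Adeg A (m • u) = m • Adeg A u := by
  simp only [Adeg, ← Matrix.mulVec_smul]
  rfl

theorem finite_setOf_Adeg_eq
    (hpointed : ∃ h : Fin d → ℤ, ∀ j : Fin n, 0 < ∑ i, h i * A i j) (α : Fin d → ℤ) :
    {u | Adeg A u = α}.Finite := by
  obtain ⟨h, hpos⟩ := hpointed
  refine (Finsupp.finite_of_degree_le (h ⬝ᵥ α).toNat).subset fun u hu => ?_
  have hdeg : (u.degree : ℤ) ≤ h ⬝ᵥ α := by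
    rw [← hu, Adeg, Matrix.dotProduct_mulVec, Finsupp.degree_eq_sum]
    push_cast
    exact Finset.sum_le_sum fun j _ => le_mul_of_one_le_left (by positivity) (hpos j)
  simp only [Set.mem_ofPred_eq]
  omega

theorem finite_AgradedPiece
    (hpointed : ∃ h : Fin d → ℤ, ∀ j : Fin n, 0 < ∑ i, h i * A i j)
    (I : Ideal (MvPolynomial (Fin n) ℂ)) (α : Fin d → ℤ) :
    Module.Finite ℂ (AgradedPiece A I α) := by
  refine Module.Finite.span_of_finite ℂ ((((finite_setOf_Adeg_eq A hpointed α).image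
    fun u => (monomial u 1 : MvPolynomial (Fin n) ℂ)).image (Ideal.Quotient.mk I)).subset ?_)
  rintro _ ⟨_, ⟨u, hu, rfl⟩, rfl⟩
  exact ⟨_, ⟨u, hu, rfl⟩, rfl⟩

theorem mk_monomial_mem_AgradedPiece (I : Ideal (MvPolynomial (Fin n) ℂ)) (u : Fin n →₀ ℕ) :
    Ideal.Quotient.mk I (monomial u 1) ∈ AgradedPiece A I (Adeg A u) :=
  Submodule.subset_span ⟨_, ⟨u, rfl, rfl⟩, rfl⟩

theorem mk_pow_mul_pow_mem_AgradedPiece (I : Ideal (MvPolynomial (Fin n) ℂ))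
    {u v : Fin n →₀ ℕ} (huv : Adeg A u = Adeg A v) {m i : ℕ} (hi : i ≤ m) :
    Ideal.Quotient.mk I (monomial u 1) ^ i * Ideal.Quotient.mk I (monomial v 1) ^ (m - i) ∈
      AgradedPiece A I (m • Adeg A u) := by
  have hdeg : Adeg A (i • u + (m - i) • v) = m • Adeg A u := by
    rw [Adeg_add, Adeg_nsmul, Adeg_nsmul, ← huv, ← add_nsmul, Nat.add_sub_cancel' hi]
  simp only [← map_pow (Ideal.Quotient.mk I), ← map_mul, monomial_pow, monomial_mul, one_pow,
    one_mul, ← hdeg]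
  exact mk_monomial_mem_AgradedPiece A I _

noncomputable def Acomponent (α : Fin d → ℤ) (f : MvPolynomial (Fin n) ℂ) :
    MvPolynomial (Fin n) ℂ :=
  (f.support.filter fun u => Adeg A u = α).sum fun u => monomial u (f.coeff u)

theorem sum_Acomponent (f : MvPolynomial (Fin n) ℂ) :
    ∑ α ∈ f.support.image (Adeg A), Acomponent A α f = f := by
  simp only [Acomponent]
  rw [Finset.sum_fiberwise_of_maps_to fun u hu => Finset.mem_image_of_mem _ hu]
  exact f.as_sum.symm

theorem Adeg_eq_of_mem_support_Acomponent {α : Fin d → ℤ} {f : MvPolynomial (Fin n) ℂ}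
    {w : Fin n →₀ ℕ} (hw : w ∈ (Acomponent A α f).support) : Adeg A w = α := by
  obtain ⟨u, hu, hwu⟩ := Finset.mem_biUnion.mp (support_sum hw)
  rw [Finset.mem_singleton.mp (support_monomial_subset hwu)]
  exact (Finset.mem_filter.mp hu).2

end Grading

section Toral

variable {d n : ℕ} (A : Matrix (Fin d) (Fin n) ℤ)
  {p : Ideal (MvPolynomial (Fin n) ℂ)} [p.IsPrime]

theorem exists_sub_smul_monomial_mem
    (hpointed : ∃ h : Fin d → ℤ, ∀ j : Fin n, 0 < ∑ i, h i * A i j) (htoral : Toral A p)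
    {u v : Fin n →₀ ℕ} (huv : Adeg A u = Adeg A v) (hv : monomial v 1 ∉ p) :
    ∃ c : ℂ, monomial u 1 - c • monomial v 1 ∈ p := by
  by_contra! h
  let mk := Ideal.Quotient.mk p
  have hb : mk (monomial v 1) ≠ 0 := by rwa [Ne, Ideal.Quotient.eq_zero_iff_mem]
  have hab : ∀ c : ℂ, mk (monomial u 1) ≠ c • mk (monomial v 1) := fun c hc => by
    refine h c (Ideal.Quotient.eq_zero_iff_mem.mp ?_)
    rw [map_sub, ← Ideal.Quotient.mkₐ_eq_mk ℂ, map_smul, Ideal.Quotient.mkₐ_eq_mk, ← hc,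
      sub_self]
  obtain ⟨C, hC⟩ := htoral
  have := finite_AgradedPiece A hpointed p (C • Adeg A u)
  let w : Fin (C + 1) → AgradedPiece A p (C • Adeg A u) := fun i =>
    ⟨_, mk_pow_mul_pow_mem_AgradedPiece A p huv (Nat.lt_succ_iff.mp i.isLt)⟩
  have hw : LinearIndependent ℂ w :=
    .of_comp (AgradedPiece A p _).subtype (linearIndependent_pow_mul_pow hb hab C)
  have hcard := hw.fintype_card_le_finrank
  rw [Fintype.card_fin] at hcard
  have := hC (C • Adeg A u)
  omega

theorem mem_span_binomialsIn_of_Adeg_eq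
    (hpointed : ∃ h : Fin d → ℤ, ∀ j : Fin n, 0 < ∑ i, h i * A i j) (htoral : Toral A p)
    {g : MvPolynomial (Fin n) ℂ} (hg : g ∈ p) {α : Fin d → ℤ}
    (hhom : ∀ w ∈ g.support, Adeg A w = α) :
    g ∈ Ideal.span (binomialsIn p) := by
  by_cases h : ∃ u ∈ g.support, monomial u 1 ∉ p
  · obtain ⟨u, hu, hup⟩ := h
    exact mem_span_binomialsIn_of_forall_sub_smul_mem hg hup fun w hw =>
      exists_sub_smul_monomial_mem A hpointed htoral ((hhom w hw).trans (hhom u hu).symm) hup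
  · push Not at h
    exact mem_span_binomialsIn_of_forall_monomial_mem h

end Toral

theorem toral_prime_is_binomial_general {d n : ℕ} (A : Matrix (Fin d) (Fin n) ℤ)
    (hpointed : ∃ h : Fin d → ℤ, ∀ j : Fin n, 0 < ∑ i, h i * A i j)
    (p : Ideal (MvPolynomial (Fin n) ℂ))
    (hprime : p.IsPrime) (hgraded : AGraded A p) (htoral : Toral A p) :
    ∃ S : Set (MvPolynomial (Fin n) ℂ), p = Ideal.span S ∧
      ∀ f ∈ S, ∃ (u v : Fin n →₀ ℕ) (lam : ℂ),
        f = monomial u 1 - lam • monomial v 1 := by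
  refine ⟨binomialsIn p, le_antisymm (fun f hf => ?_) (Ideal.span_le.mpr fun f hf => hf.1),
    fun f hf => hf.2⟩
  rw [← sum_Acomponent A f]
  exact Ideal.sum_mem _ fun α _ => mem_span_binomialsIn_of_Adeg_eq A hpointed htoral
    (hgraded f hf α) fun w hw => Adeg_eq_of_mem_support_Acomponent A hw

/-- Every `A`-graded toral prime ideal is a binomial ideal. -/
theorem toral_prime_is_binomial {d n : ℕ} (A : Matrix (Fin d) (Fin n) ℤ)
    (hrank : A.rank = d)
    (hpointed : ∃ h : Fin d → ℤ, ∀ j : Fin n, 0 < ∑ i, h i * A i j)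
    (hZA : ∀ α : Fin d → ℤ, ∃ c : Fin n → ℤ, A.mulVec c = α)
    (p : Ideal (MvPolynomial (Fin n) ℂ))
    (hprime : p.IsPrime) (hgraded : AGraded A p) (htoral : Toral A p) :
    ∃ S : Set (MvPolynomial (Fin n) ℂ), p = Ideal.span S ∧
      ∀ f ∈ S, ∃ (u v : Fin n →₀ ℕ) (lam : ℂ),
        f = monomial u 1 - lam • monomial v 1 :=
  toral_prime_is_binomial_general A hpointed p hprime hgraded htoral
end

section
/- Let M be a 2 × 2 integer matrix of the form M = [[a, b], [-c, -d]] with a, b, c, d positive integers and det(M) = -ad + bc ≠ 0 (M mixed and invertible over ℚ). Then the number of bounded (finite) M-subgraphs of ℕ² is min(ad, bc). -/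
/-- Adjacency in the graph `Γ(M)` on `ℕ²` for `M = [[a,b],[-c,-d]]`:
`u` and `v` are adjacent if `u - v` or `v - u` equals `(a,-c)` or `(b,-d)`. -/
def edge2 (a b c d : ℕ) (u v : ℕ × ℕ) : Prop :=
  (u.1 = v.1 + a ∧ v.2 = u.2 + c) ∨ (v.1 = u.1 + a ∧ u.2 = v.2 + c) ∨
  (u.1 = v.1 + b ∧ v.2 = u.2 + d) ∨ (v.1 = u.1 + b ∧ u.2 = v.2 + d)

/-- The `M`-subgraph (connected component of `Γ(M)`) containing `u`. -/
def Mcomp (a b c d : ℕ) (u : ℕ × ℕ) : Set (ℕ × ℕ) :=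
  {v | Relation.ReflTransGen (edge2 a b c d) u v}

/-!
Assume `a d < b c`; the other case follows by swapping the two columns of `M`. Call `p ∈ ℕ²` a
corner if `p.1 < a` and `p.2 < d`; there are `a d` corners. Every point of the component of a
corner `p` has the form `p + k (a, -c) + s (b, -d)` with `k ≥ 0`, so the weight `d x + b y`, which
changes by `(a d - b c) k`, never exceeds its value at `p`: the component is finite. Two corners
in one component coincide, since `k = 0` in both directions by invertibility of `M`, and then
`s = 0`. Conversely, `(a + 1) (d x + b y) + x` strictly increases along the moves `(-a, c)` and
`(b, -d)`, so at its maximum on a finite component neither move is possible: that point is a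
corner.
-/

instance {a b c d : ℕ} : Std.Symm (edge2 a b c d) where
  symm _ _ h := by unfold edge2 at *; tauto

lemma edge2_swap {a b c d : ℕ} : edge2 a b c d = edge2 b a d c := by
  funext u v
  unfold edge2
  exact propext (by tauto)

namespace Mcomp

variable {a b c d : ℕ}

lemma swap : Mcomp a b c d = Mcomp b a d c := by
  unfold Mcomp
  rw [edge2_swap]

lemma eq_of_mem {u v : ℕ × ℕ} (h : v ∈ Mcomp a b c d u) :
    Mcomp a b c d v = Mcomp a b c d u := by
  ext w
  exact ⟨h.trans, (symm h).trans⟩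

lemma exists_coords_of_mem_of_corner {p v : ℕ × ℕ} (hp1 : p.1 < a) (hp2 : p.2 < d)
    (hv : v ∈ Mcomp a b c d p) :
    ∃ k s : ℤ, 0 ≤ k ∧ (v.1 : ℤ) = p.1 + a * k + b * s ∧ (v.2 : ℤ) = p.2 - c * k - d * s := by
  induction hv with
  | refl => exact ⟨0, 0, le_rfl, by ring, by ring⟩
  | @tail x w _ hxw ih =>
    obtain ⟨k, s, hk, hx1, hx2⟩ := ih
    rcases hxw with ⟨h1, h2⟩ | ⟨h1, h2⟩ | ⟨h1, h2⟩ | ⟨h1, h2⟩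
    · -- With `k = 0`, `x = p + s (b, -d)`; then `x.1 ≥ a > p.1` forces `s > 0`, so `x.2 < 0`.
      have hk0 : k ≠ 0 := by
        rintro rfl
        have hs : 0 < s := by
          by_contra! hs
          nlinarith
        nlinarith
      exact ⟨k - 1, s, by omega, by push_cast [h1] at hx1 ⊢; linarith,
        by push_cast [h2] at hx2 ⊢; linarith⟩
    · exact ⟨k + 1, s, by omega, by push_cast [h1]; linarith, by push_cast [h2] at hx2; linarith⟩
    · exact ⟨k, s - 1, hk, by push_cast [h1] at hx1 ⊢; linarith,
        by push_cast [h2] at hx2 ⊢; linarith⟩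
    · exact ⟨k, s + 1, hk, by push_cast [h1]; linarith, by push_cast [h2] at hx2; linarith⟩

lemma weight_le_of_mem_of_corner (H : a * d < b * c) {p v : ℕ × ℕ} (hp1 : p.1 < a)
    (hp2 : p.2 < d) (hv : v ∈ Mcomp a b c d p) : d * v.1 + b * v.2 ≤ d * p.1 + b * p.2 := by
  obtain ⟨k, s, hk, hv1, hv2⟩ := exists_coords_of_mem_of_corner hp1 hp2 hv
  have hH : (a * d : ℤ) < b * c := by exact_mod_cast H
  have : (d * v.1 + b * v.2 : ℤ) = d * p.1 + b * p.2 - k * (b * c - a * d) := by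
    rw [hv1, hv2]; ring
  zify
  nlinarith

lemma finite_of_corner (H : a * d < b * c) {p : ℕ × ℕ} (hp1 : p.1 < a) (hp2 : p.2 < d) :
    (Mcomp a b c d p).Finite := by
  have hb : 0 < b := Nat.pos_of_mul_pos_right (Nat.zero_le _ |>.trans_lt H)
  have hd : 0 < d := p.2.zero_le.trans_lt hp2
  have hN := Set.finite_Iic (d * p.1 + b * p.2)
  refine (hN.prod hN).subset fun v hv => ?_
  have := weight_le_of_mem_of_corner H hp1 hp2 hv
  constructor <;> simp only [Set.mem_Iic] <;> nlinarith

lemma eq_of_mem_of_corner (hdet : a * d ≠ b * c) {p q : ℕ × ℕ} (hp1 : p.1 < a) (hp2 : p.2 < d)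
    (hq1 : q.1 < a) (hq2 : q.2 < d) (hq : q ∈ Mcomp a b c d p) : q = p := by
  obtain ⟨k, s, hk, hq1', hq2'⟩ := exists_coords_of_mem_of_corner hp1 hp2 hq
  obtain ⟨k', s', hk', hp1', hp2'⟩ := exists_coords_of_mem_of_corner hq1 hq2 (symm hq)
  have hdet' : (a * d - b * c : ℤ) ≠ 0 := sub_ne_zero.mpr (by exact_mod_cast hdet)
  have hkk : (a * d - b * c : ℤ) * (k + k') = 0 := by
    linear_combination -d * (hp1' + hq1') - b * (hp2' + hq2')
  have hk0 : k = 0 := by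
    have := (mul_eq_zero.mp hkk).resolve_left hdet'
    omega
  subst hk0
  have hs0 : s = 0 := by
    by_contra! hs
    rcases hs.lt_or_gt with hs | hs <;> nlinarith
  subst hs0
  ext <;> omega

lemma exists_corner_of_finite (H : a * d < b * c) {u : ℕ × ℕ} (hfin : (Mcomp a b c d u).Finite) :
    ∃ p ∈ Mcomp a b c d u, p.1 < a ∧ p.2 < d := by
  obtain ⟨p, hp, hmax⟩ := Set.exists_max_image _ (fun v => (a + 1) * (d * v.1 + b * v.2) + v.1)
    hfin ⟨u, Relation.ReflTransGen.refl⟩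
  refine ⟨p, hp, ?_, ?_⟩
  · by_contra! hp1
    have := hmax (p.1 - a, p.2 + c) (hp.tail (Or.inl ⟨by omega, rfl⟩))
    zify [hp1] at this
    nlinarith
  · by_contra! hp2
    have := hmax (p.1 + b, p.2 - d) (hp.tail (Or.inr (Or.inr (Or.inr ⟨rfl, by omega⟩))))
    have hb : 0 < b := Nat.pos_of_mul_pos_right (Nat.zero_le _ |>.trans_lt H)
    zify [hp2] at this
    nlinarith

theorem ncard_finite_components_of_lt (H : a * d < b * c) :
    {Γ : Set (ℕ × ℕ) | (∃ u, Γ = Mcomp a b c d u) ∧ Γ.Finite}.ncard = a * d := by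
  have hcorners : {Γ : Set (ℕ × ℕ) | (∃ u, Γ = Mcomp a b c d u) ∧ Γ.Finite} =
      Mcomp a b c d '' (Set.Iio a ×ˢ Set.Iio d) := by
    ext Γ
    constructor
    · rintro ⟨⟨u, rfl⟩, hfin⟩
      obtain ⟨p, hp, hp1, hp2⟩ := exists_corner_of_finite H hfin
      exact ⟨p, ⟨hp1, hp2⟩, eq_of_mem hp⟩
    · rintro ⟨p, ⟨hp1, hp2⟩, rfl⟩
      exact ⟨⟨p, rfl⟩, finite_of_corner H hp1 hp2⟩
  have hinj : Set.InjOn (Mcomp a b c d) (Set.Iio a ×ˢ Set.Iio d) := by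
    rintro p ⟨hp1, hp2⟩ q ⟨hq1, hq2⟩ hpq
    refine eq_of_mem_of_corner H.ne hq1 hq2 hp1 hp2 ?_
    rw [← hpq]
    exact Relation.ReflTransGen.refl
  rw [hcorners, hinj.ncard_image, Set.ncard_prod, Set.ncard_Iio_nat, Set.ncard_Iio_nat]

end Mcomp

theorem card_bounded_M_subgraphs_general (a b c d : ℕ)
    (hdet : a * d ≠ b * c) :
    {Γ : Set (ℕ × ℕ) | (∃ u, Γ = Mcomp a b c d u) ∧ Γ.Finite}.ncard =
      min (a * d) (b * c) := by
  rcases hdet.lt_or_gt with H | H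
  · rw [min_eq_left H.le, Mcomp.ncard_finite_components_of_lt H]
  · rw [min_eq_right H.le, Mcomp.swap, Mcomp.ncard_finite_components_of_lt H]

/-- For a mixed invertible matrix `M = [[a,b],[-c,-d]]` with `a,b,c,d > 0` and
`ad ≠ bc`, the number of bounded `M`-subgraphs of `ℕ²` is `min(ad, bc)`. -/
theorem card_bounded_M_subgraphs (a b c d : ℕ)
    (ha : 0 < a) (hb : 0 < b) (hc : 0 < c) (hd : 0 < d)
    (hdet : a * d ≠ b * c) :
    {Γ : Set (ℕ × ℕ) | (∃ u, Γ = Mcomp a b c d u) ∧ Γ.Finite}.ncard =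
      min (a * d) (b * c) :=
  card_bounded_M_subgraphs_general a b c d hdet
end
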